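/- For a consistent summary S and a CQ q with res(q) ⊆ dom(μ), the variance of the cardinality of q on S satisfies v_S[q] = E_S[q ∪ ρ(q)] − (E_S[q])², where ρ is any substitution mapping each variable of q to a fresh variable (distinct fresh variables for distinct variables, all not occurring in q). -/

import Mathlib

/- ## Basic RDF notions -/

attribute [local instance] Classical.propDecidable

/-- A term is a resource or a variable. -/
inductive Term (R V : Type) where
  | res : R → Term R V
  | var : V → Term R V
deriving DecidableEq

/-- An atom is a triple of terms. -/
abbrev Atom (R V : Type) := Term R V × Term R V × Term R V

/-- An RDF graph is a finite set of triples of resources. -/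
abbrev RDFGraph (R : Type) := Finset (R × R × R)

/-- A conjunctive query is a finite set of atoms. -/
abbrev CQ (R V : Type) := Finset (Atom R V)

variable {R V : Type} [DecidableEq R] [DecidableEq V]

/-- The resources occurring in an RDF graph. -/
def graphRes (G : RDFGraph R) : Finset R :=
  G.image (fun t => t.1) ∪ G.image (fun t => t.2.1) ∪ G.image (fun t => t.2.2)

/-- A summary `S = (H, w, μ)`: a summarisation graph `H`, a weight function `w`
positive on `H`, and a summarisation function `μ` defined on a finite set `dom` of
resources, surjective onto the resources of `H` (the buckets). -/
structure Summary (R : Type) [DecidableEq R] where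
  H : RDFGraph R
  w : R × R × R → ℕ
  dom : Finset R
  μ : R → R
  w_pos : ∀ h ∈ H, 0 < w h
  surj : ∀ b ∈ graphRes H, ∃ r ∈ dom, μ r = b

/-- Application of `μ` to a resource (resources outside `dom μ` are left unchanged). -/
def appMu (S : Summary R) (r : R) : R := if r ∈ S.dom then S.μ r else r

/-- Application of `μ` to a triple of resources. -/
def muT (S : Summary R) (t : R × R × R) : R × R × R :=
  (appMu S t.1, appMu S t.2.1, appMu S t.2.2)

/-- The `S`-size of a bucket: the number of resources mapped to it. -/
def size1 (S : Summary R) (b : R) : ℕ := (S.dom.filter (fun r => S.μ r = b)).card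

/-- The `S`-size of a triple of buckets. -/
def size3 (S : Summary R) (h : R × R × R) : ℕ := size1 S h.1 * size1 S h.2.1 * size1 S h.2.2

/-- `S` represents the RDF graph `G`. -/
def represents (S : Summary R) (G : RDFGraph R) : Prop :=
  graphRes G ⊆ S.dom ∧ S.H = G.image (muT S) ∧
    ∀ h ∈ S.H, S.w h = (G.filter (fun t => muT S t = h)).card

/-- `⟦S⟧`: the set of all RDF graphs represented by `S`. -/
def worlds (S : Summary R) : Set (RDFGraph R) := {G | represents S G}

/-- A summary is consistent if it represents at least one graph. -/
def consistent (S : Summary R) : Prop := (worlds S).Nonempty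

/- ## Queries, substitutions and answers -/

def varsT : Term R V → Finset V
  | .res _ => ∅
  | .var x => {x}

def resT : Term R V → Finset R
  | .res r => {r}
  | .var _ => ∅

def varsA (a : Atom R V) : Finset V := varsT a.1 ∪ varsT a.2.1 ∪ varsT a.2.2

def resA (a : Atom R V) : Finset R := resT a.1 ∪ resT a.2.1 ∪ resT a.2.2

/-- The variables of a CQ. -/
def varsQ (q : CQ R V) : Finset V := q.biUnion varsA

/-- The resources of a CQ. -/
def resQ (q : CQ R V) : Finset R := q.biUnion resA

/-- The terms of a CQ. -/
def termsQ (q : CQ R V) : Finset (Term R V) := q.biUnion (fun a => {a.1, a.2.1, a.2.2})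

/-- A substitution (a partial map from variables to resources) applied to a term. -/
def appT (π : V → Option R) : Term R V → Option R
  | .res r => some r
  | .var x => π x

/-- Application of a substitution to a term, with a default value (only used when the
substitution is undefined on a variable of the term). -/
def appTD [Inhabited R] (π : V → Option R) (t : Term R V) : R := (appT π t).getD default

/-- Application of a substitution to an atom. -/
def appAtomD [Inhabited R] (π : V → Option R) (a : Atom R V) : R × R × R :=
  (appTD π a.1, appTD π a.2.1, appTD π a.2.2)

/-- `ans(q, G)`: the answers to the CQ `q` on the graph `G`, i.e. substitutions whose
domain is exactly `var(q)` and which map every atom of `q` into `G`. -/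
def ansSet [Inhabited R] (q : CQ R V) (G : RDFGraph R) : Set (V → Option R) :=
  {π | (∀ x, (π x).isSome ↔ x ∈ varsQ q) ∧ ∀ a ∈ q, appAtomD π a ∈ G}

/-- `E_S[q]`: the expected cardinality of `q` over the graphs represented by `S`. -/
noncomputable def expect [Inhabited R] (S : Summary R) (q : CQ R V) : ℝ :=
  (∑ᶠ G ∈ worlds S, ((ansSet q G).ncard : ℝ)) / ((worlds S).ncard : ℝ)

/-- `v_S[q]`: the variance of the cardinality of `q` over the graphs represented by `S`. -/
noncomputable def varq [Inhabited R] (S : Summary R) (q : CQ R V) : ℝ :=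
  (∑ᶠ G ∈ worlds S, (((ansSet q G).ncard : ℝ) - expect S q) ^ 2) / ((worlds S).ncard : ℝ)

/-- `μ` applied to a term. -/
def muTerm (S : Summary R) : Term R V → Term R V
  | .res r => .res (appMu S r)
  | .var x => .var x

/-- `μ` applied to an atom. -/
def muAtom (S : Summary R) (a : Atom R V) : Atom R V :=
  (muTerm S a.1, muTerm S a.2.1, muTerm S a.2.2)

/-- `μ(q)`: the CQ obtained by applying `μ` to every atom of `q`. -/
def muQ (S : Summary R) (q : CQ R V) : CQ R V := q.image (muAtom S)

/- ## Partitions of a query -/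

/-- A partition of a CQ `q`: mutually disjoint nonempty subsets of `q` covering `q`. -/
def IsPartition (q : CQ R V) (P : Finset (CQ R V)) : Prop :=
  (∀ u ∈ P, u.Nonempty) ∧ (∀ u ∈ P, ∀ u' ∈ P, u ≠ u' → Disjoint u u') ∧ P.biUnion id = q

/-- The edges of the term graph `G_P`. -/
def edgeRel (P : Finset (CQ R V)) (t t' : Term R V) : Prop :=
  ∃ u ∈ P, ∃ a ∈ u, ∃ a' ∈ u,
    (t = a.1 ∧ t' = a'.1) ∨ (t = a.2.1 ∧ t' = a'.2.1) ∨ (t = a.2.2 ∧ t' = a'.2.2)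

/-- Reachability in the term graph `G_P`. -/
def reach (P : Finset (CQ R V)) (t t' : Term R V) : Prop := Relation.EqvGen (edgeRel P) t t'

/-- `P` is unifiable: no two distinct resources of `q` are connected in `G_P`. -/
def UnifiablePart (q : CQ R V) (P : Finset (CQ R V)) : Prop :=
  ∀ r r' : R, Term.res r ∈ termsQ q → Term.res r' ∈ termsQ q →
    reach P (Term.res r) (Term.res r') → r = r'

/-- The partition base `B` of `q`: all unifiable partitions of `q`. -/
def pbase (q : CQ R V) : Set (Finset (CQ R V)) := {P | IsPartition q P ∧ UnifiablePart q P}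

/-- The partial order `⪯` on partitions. -/
def pref (P P' : Finset (CQ R V)) : Prop := ∀ u ∈ P, ∃ u' ∈ P', u ⊆ u'

/-- The strict order `≺` on partitions. -/
def sPref (P P' : Finset (CQ R V)) : Prop := pref P P' ∧ P ≠ P'

/-- Chains from `P` to `P'` in the partition base of `q` (as nonempty lists
`[P = P_0, …, P_ℓ = P']`; the length of the chain is the list length minus one). -/
def chainSet (q : CQ R V) (P P' : Finset (CQ R V)) : Set (List (Finset (CQ R V))) :=
  {l | l ≠ [] ∧ l.Chain' sPref ∧ (∀ X ∈ l, X ∈ pbase q) ∧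
    l.head? = some P ∧ l.getLast? = some P'}

/-- `K(P, P')`: the number of even-length chains minus the number of odd-length chains. -/
noncomputable def Kcoef (q : CQ R V) (P P' : Finset (CQ R V)) : ℤ :=
  ({l ∈ chainSet q P P' | Even (l.length - 1)}.ncard : ℤ)
    - ({l ∈ chainSet q P P' | Odd (l.length - 1)}.ncard : ℤ)

/-- `σ_P`: maps each variable `x` of `q` to the `≤`-least term reachable from `x` in `G_P`. -/
noncomputable def sigmaP [LinearOrder (Term R V)] (q : CQ R V) (P : Finset (CQ R V)) (x : V) :
    Term R V :=
  if h : ((termsQ q).filter (fun t => reach P (Term.var x) t)).Nonempty then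
    ((termsQ q).filter (fun t => reach P (Term.var x) t)).min' h
  else Term.var x

/-- The answer `τ` to `μ(q)` on `H` satisfies the partition `P`. -/
def satisfiesP [LinearOrder (Term R V)] (S : Summary R) (q : CQ R V) (τ : V → Option R)
    (P : Finset (CQ R V)) : Prop :=
  P ∈ pbase q ∧ ∀ x ∈ varsQ q,
    (∀ y, sigmaP q P x = Term.var y → τ x = τ y) ∧
    (∀ r, sigmaP q P x = Term.res r → τ x = some (appMu S r))

/-- `B_τ`: the partitions of the partition base satisfied by `τ`. -/
def Btau [LinearOrder (Term R V)] (S : Summary R) (q : CQ R V) (τ : V → Option R) :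
    Set (Finset (CQ R V)) := {P | satisfiesP S q τ P}

/-- The variables occurring in the range of `σ_P`. -/
noncomputable def vrngP [LinearOrder (Term R V)] (q : CQ R V) (P : Finset (CQ R V)) : Finset V :=
  (varsQ q).filter (fun y => ∃ x ∈ varsQ q, sigmaP q P x = Term.var y)

/-- The `S`-size of an optional bucket. -/
def sizeOpt (S : Summary R) (o : Option R) : ℕ := o.elim 0 (size1 S)

/-- `c(τ, P) = ∏_{x ∈ vrng(σ_P)} size_S(τ(x))`. -/
noncomputable def cCoef [LinearOrder (Term R V)] (S : Summary R) (q : CQ R V)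
    (τ : V → Option R) (P : Finset (CQ R V)) : ℕ :=
  ∏ y ∈ vrngP q P, sizeOpt S (τ y)

/-- `τ(μ(q))`. -/
noncomputable def tauMuQ [Inhabited R] (S : Summary R) (q : CQ R V) (τ : V → Option R) :
    RDFGraph R := (muQ S q).image (appAtomD τ)

/-- `n_h = |{u ∈ P : τ(μ(u)) = {h}}|`. -/
noncomputable def nCount [Inhabited R] (S : Summary R) (τ : V → Option R)
    (P : Finset (CQ R V)) (h : R × R × R) : ℕ :=
  (P.filter (fun u => u.image (fun a => appAtomD τ (muAtom S a)) = ({h} : Finset (R × R × R)))).card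

/-- `F(τ, P)`, defined via falling factorials. -/
noncomputable def Fcoef [Inhabited R] (S : Summary R) (q : CQ R V) (τ : V → Option R)
    (P : Finset (CQ R V)) : ℝ :=
  if ∀ h ∈ tauMuQ S q τ, nCount S τ P h ≤ S.w h then
    ∏ h ∈ tauMuQ S q τ,
      ((S.w h).descFactorial (nCount S τ P h) : ℝ) / ((size3 S h).descFactorial (nCount S τ P h) : ℝ)
  else 0

/-- `Exp_τ(P)`: the `τ`-expansions to `P`. -/
def ExpSet [LinearOrder (Term R V)] (S : Summary R) (q : CQ R V) (τ : V → Option R)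
    (P : Finset (CQ R V)) : Set (V → Option R) :=
  {π | (∀ x, (π x).isSome ↔ x ∈ varsQ q) ∧ (∀ x r, π x = some r → r ∈ S.dom) ∧
    ∀ x ∈ varsQ q,
      Option.map (appMu S) (π x) = τ x ∧
      (∀ y, sigmaP q P x = Term.var y → π x = π y) ∧
      (∀ r, sigmaP q P x = Term.res r → π x = some r)}

/-- `MaxExp_τ(P)`: the `τ`-expansions to `P` that are not `τ`-expansions to any `P' ≻ P`. -/
def MaxExp [LinearOrder (Term R V)] (S : Summary R) (q : CQ R V) (τ : V → Option R)
    (P : Finset (CQ R V)) : Set (V → Option R) :=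
  {π ∈ ExpSet S q τ P | ¬ ∃ P' ∈ Btau S q τ, sPref P P' ∧ π ∈ ExpSet S q τ P'}

/- ## Renaming, unification, q-error -/

def renTerm (ρ : V → V) : Term R V → Term R V
  | .res r => .res r
  | .var x => .var (ρ x)

/-- `ρ(q)`: renaming of the variables of `q` along `ρ`. -/
def renameQ (ρ : V → V) (q : CQ R V) : CQ R V :=
  q.image (fun a => (renTerm ρ a.1, renTerm ρ a.2.1, renTerm ρ a.2.2))

/-- Application of a variable-to-term substitution `κ` to a term. -/
def appK (κ : V → Term R V) : Term R V → Term R V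
  | .res r => .res r
  | .var x => κ x

/-- Two atoms are unifiable if some substitution `κ` makes them equal. -/
def unifAtoms (a1 a2 : Atom R V) : Prop :=
  ∃ κ : V → Term R V,
    (appK κ a1.1, appK κ a1.2.1, appK κ a1.2.2) = (appK κ a2.1, appK κ a2.2.1, appK κ a2.2.2)

/-- `q` is `μ`-unification-free: no two distinct atoms of `μ(q)` are unifiable. -/
def muUnifFree (S : Summary R) (q : CQ R V) : Prop :=
  ∀ a1 ∈ muQ S q, ∀ a2 ∈ muQ S q, a1 ≠ a2 → ¬ unifAtoms a1 a2

/-- The q-error of estimating a cardinality `N` as `E`. -/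
noncomputable def qerror (N E : ℝ) : ℝ := max (max N 1 / max E 1) (max E 1 / max N 1)

/-- A triple of resources viewed as a (variable-free) atom. -/
def resAtom (t : R × R × R) : Atom R V := (Term.res t.1, Term.res t.2.1, Term.res t.2.2)

/-- `μ⁻¹(h)`: the triples over `dom(μ)` that summarise as `h`. -/
def preim (S : Summary R) (h : R × R × R) : Finset (R × R × R) :=
  (S.dom ×ˢ S.dom ×ˢ S.dom).filter (fun t => muT S t = h)

-- auxiliary lemmas
lemma varsT_renTerm (ρ : V → V) (t : Term R V) : varsT (renTerm ρ t) = (varsT t).image ρ := by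
  cases t <;> simp [varsT, renTerm]

lemma varsA_ren (ρ : V → V) (a : Atom R V) :
    varsA (renTerm ρ a.1, renTerm ρ a.2.1, renTerm ρ a.2.2) = (varsA a).image ρ := by
  simp [varsA, varsT_renTerm, Finset.image_union]

lemma varsQ_renameQ (ρ : V → V) (q : CQ R V) : varsQ (renameQ ρ q) = (varsQ q).image ρ := by
  ext y
  simp only [varsQ, renameQ, Finset.mem_biUnion, Finset.mem_image]
  constructor
  · rintro ⟨a, ⟨b, hb, rfl⟩, hy⟩
    rw [varsA_ren] at hy
    simp only [Finset.mem_image] at hy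
    obtain ⟨x, hx, rfl⟩ := hy
    exact ⟨x, ⟨b, hb, hx⟩, rfl⟩
  · rintro ⟨x, ⟨b, hb, hx⟩, rfl⟩
    refine ⟨_, ⟨b, hb, rfl⟩, ?_⟩
    rw [varsA_ren]
    exact Finset.mem_image_of_mem _ hx

lemma varsQ_union (q q' : CQ R V) : varsQ (q ∪ q') = varsQ q ∪ varsQ q' := by
  ext x
  simp only [varsQ, Finset.mem_biUnion, Finset.mem_union]
  constructor
  · rintro ⟨a, ha | ha, hx⟩
    exacts [Or.inl ⟨a, ha, hx⟩, Or.inr ⟨a, ha, hx⟩]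
  · rintro (⟨a, ha, hx⟩ | ⟨a, ha, hx⟩)
    exacts [⟨a, Or.inl ha, hx⟩, ⟨a, Or.inr ha, hx⟩]

lemma appTD_congr [Inhabited R] {π π' : V → Option R} (t : Term R V)
    (h : ∀ x ∈ varsT t, π x = π' x) : appTD π t = appTD π' t := by
  cases t with
  | res r => rfl
  | var x => simp [appTD, appT, h x (by simp [varsT])]

lemma appAtomD_congr [Inhabited R] {π π' : V → Option R} (a : Atom R V)
    (h : ∀ x ∈ varsA a, π x = π' x) : appAtomD π a = appAtomD π' a := by
  have h1 : ∀ x ∈ varsT a.1, π x = π' x := fun x hx => h x (by simp [varsA, hx])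
  have h2 : ∀ x ∈ varsT a.2.1, π x = π' x := fun x hx => h x (by simp [varsA, hx])
  have h3 : ∀ x ∈ varsT a.2.2, π x = π' x := fun x hx => h x (by simp [varsA, hx])
  simp [appAtomD, appTD_congr _ h1, appTD_congr _ h2, appTD_congr _ h3]

lemma appTD_renTerm [Inhabited R] (π : V → Option R) (ρ : V → V) (t : Term R V) :
    appTD π (renTerm ρ t) = appTD (fun x => π (ρ x)) t := by
  cases t <;> rfl

def restr1 (q : CQ R V) (π : V → Option R) : V → Option R :=
  fun x => if x ∈ varsQ q then π x else none

def restr2 (q : CQ R V) (ρ : V → V) (π : V → Option R) : V → Option R :=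
  fun x => if x ∈ varsQ q then π (ρ x) else none

noncomputable def combMap (q : CQ R V) (ρ : V → V) (π₁ π₂ : V → Option R) : V → Option R :=
  fun z => if z ∈ varsQ q then π₁ z
    else if h : ∃ x, x ∈ varsQ q ∧ ρ x = z then π₂ h.choose else none

lemma combMap_apply_rho (q : CQ R V) (ρ : V → V)
    (hinj : Set.InjOn ρ (varsQ q : Set V)) (hfresh : ∀ x ∈ varsQ q, ρ x ∉ varsQ q)
    (π₁ π₂ : V → Option R) {x : V} (hx : x ∈ varsQ q) :
    combMap q ρ π₁ π₂ (ρ x) = π₂ x := by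
  have hex : ∃ y, y ∈ varsQ q ∧ ρ y = ρ x := ⟨x, hx, rfl⟩
  unfold combMap
  rw [if_neg (hfresh x hx), dif_pos hex]
  congr 1
  exact hinj (by simpa using hex.choose_spec.1) (by simpa using hx) hex.choose_spec.2

lemma combMap_apply_none (q : CQ R V) (ρ : V → V) (π₁ π₂ : V → Option R) {z : V}
    (h1 : z ∉ varsQ q) (h2 : z ∉ (varsQ q).image ρ) :
    combMap q ρ π₁ π₂ z = none := by
  unfold combMap
  rw [if_neg h1, dif_neg]
  rintro ⟨x, hx, rfl⟩
  exact h2 (Finset.mem_image_of_mem ρ hx)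

theorem ncard_ansSet_union_rename [Inhabited R] (q : CQ R V) (ρ : V → V)
    (hinj : Set.InjOn ρ (varsQ q : Set V)) (hfresh : ∀ x ∈ varsQ q, ρ x ∉ varsQ q)
    (G : RDFGraph R) :
    (ansSet (q ∪ renameQ ρ q) G).ncard = (ansSet q G).ncard * (ansSet q G).ncard := by
  classical
  have hvqq : varsQ (q ∪ renameQ ρ q) = varsQ q ∪ (varsQ q).image ρ := by
    rw [varsQ_union, varsQ_renameQ]
  have hsubA : ∀ {a : Atom R V}, a ∈ q → varsA a ⊆ varsQ q :=
    fun {a} ha => Finset.subset_biUnion_of_mem varsA ha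
  -- restr1 maps answers of the union to answers of q
  have hmem1 : ∀ π ∈ ansSet (q ∪ renameQ ρ q) G, restr1 q π ∈ ansSet q G := by
    rintro π ⟨hdom, hat⟩
    constructor
    · intro x
      unfold restr1
      split_ifs with h
      · simp [hdom x, hvqq, h]
      · simp [h]
    · intro a ha
      have e : appAtomD (restr1 q π) a = appAtomD π a :=
        appAtomD_congr a (fun x hx => by unfold restr1; rw [if_pos (hsubA ha hx)])
      rw [e]; exact hat a (Finset.mem_union_left _ ha)
  -- restr2 maps answers of the union to answers of q
  have hmem2 : ∀ π ∈ ansSet (q ∪ renameQ ρ q) G, restr2 q ρ π ∈ ansSet q G := by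
    rintro π ⟨hdom, hat⟩
    constructor
    · intro x
      unfold restr2
      split_ifs with h
      · have hmem : ρ x ∈ varsQ (q ∪ renameQ ρ q) := by
          rw [hvqq]; exact Finset.mem_union_right _ (Finset.mem_image_of_mem ρ h)
        simp [(hdom (ρ x)).mpr hmem, h]
      · simp [h]
    · intro a ha
      have e1 : appAtomD (restr2 q ρ π) a = appAtomD (fun x => π (ρ x)) a :=
        appAtomD_congr a (fun x hx => by unfold restr2; rw [if_pos (hsubA ha hx)])
      have e2 : appAtomD (fun x => π (ρ x)) a
          = appAtomD π (renTerm ρ a.1, renTerm ρ a.2.1, renTerm ρ a.2.2) := by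
        simp [appAtomD, appTD_renTerm]
      rw [e1, e2]
      exact hat _ (Finset.mem_union_right _ (Finset.mem_image_of_mem _ ha))
  -- combMap maps pairs of answers of q to answers of the union
  have hmemc : ∀ π₁ ∈ ansSet q G, ∀ π₂ ∈ ansSet q G,
      combMap q ρ π₁ π₂ ∈ ansSet (q ∪ renameQ ρ q) G := by
    rintro π₁ ⟨hd1, ha1⟩ π₂ ⟨hd2, ha2⟩
    constructor
    · intro z
      by_cases h1 : z ∈ varsQ q
      · have : combMap q ρ π₁ π₂ z = π₁ z := by unfold combMap; rw [if_pos h1]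
        simp [this, hd1 z, h1, hvqq]
      · by_cases h2 : z ∈ (varsQ q).image ρ
        · obtain ⟨x, hx, rfl⟩ := Finset.mem_image.mp h2
          rw [combMap_apply_rho q ρ hinj hfresh π₁ π₂ hx]
          simp [hd2 x, hx, hvqq, Finset.mem_image_of_mem ρ hx]
        · rw [combMap_apply_none q ρ π₁ π₂ h1 h2]
          simp [hvqq, h1, h2]
    · intro a ha
      rcases Finset.mem_union.mp ha with ha | ha
      · have e : appAtomD (combMap q ρ π₁ π₂) a = appAtomD π₁ a :=
          appAtomD_congr a (fun x hx => by unfold combMap; rw [if_pos (hsubA ha hx)])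
        rw [e]; exact ha1 a ha
      · obtain ⟨b, hb, rfl⟩ := Finset.mem_image.mp ha
        have e1 : appAtomD (combMap q ρ π₁ π₂)
              (renTerm ρ b.1, renTerm ρ b.2.1, renTerm ρ b.2.2)
            = appAtomD (fun x => combMap q ρ π₁ π₂ (ρ x)) b := by
          simp [appAtomD, appTD_renTerm]
        have e2 : appAtomD (fun x => combMap q ρ π₁ π₂ (ρ x)) b = appAtomD π₂ b :=
          appAtomD_congr b (fun x hx =>
            combMap_apply_rho q ρ hinj hfresh π₁ π₂ (hsubA hb hx))
        rw [e1, e2]; exact ha2 b hb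
  -- the inverse identities
  have hleft : ∀ π ∈ ansSet (q ∪ renameQ ρ q) G,
      combMap q ρ (restr1 q π) (restr2 q ρ π) = π := by
    rintro π ⟨hdom, -⟩
    funext z
    by_cases h1 : z ∈ varsQ q
    · unfold combMap restr1; rw [if_pos h1, if_pos h1]
    · by_cases h2 : z ∈ (varsQ q).image ρ
      · obtain ⟨x, hx, rfl⟩ := Finset.mem_image.mp h2
        rw [combMap_apply_rho q ρ hinj hfresh _ _ hx]
        unfold restr2; rw [if_pos hx]
      · rw [combMap_apply_none q ρ _ _ h1 h2]
        have : ¬ (π z).isSome := by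
          rw [hdom z, hvqq]; simp [h1, h2]
        exact (Option.not_isSome_iff_eq_none.mp this).symm
  have hright1 : ∀ π₁ ∈ ansSet q G, ∀ π₂ : V → Option R,
      restr1 q (combMap q ρ π₁ π₂) = π₁ := by
    rintro π₁ ⟨hd1, -⟩ π₂
    funext x
    unfold restr1
    split_ifs with h
    · unfold combMap; rw [if_pos h]
    · exact (Option.not_isSome_iff_eq_none.mp (by simp [hd1 x, h])).symm
  have hright2 : ∀ π₁ : V → Option R, ∀ π₂ ∈ ansSet q G,
      restr2 q ρ (combMap q ρ π₁ π₂) = π₂ := by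
    rintro π₁ π₂ ⟨hd2, -⟩
    funext x
    unfold restr2
    split_ifs with h
    · exact combMap_apply_rho q ρ hinj hfresh π₁ π₂ h
    · exact (Option.not_isSome_iff_eq_none.mp (by simp [hd2 x, h])).symm
  -- conclude via an equivalence
  rw [← Nat.card_coe_set_eq, ← Nat.card_coe_set_eq]
  have e : ↥(ansSet (q ∪ renameQ ρ q) G) ≃ ↥(ansSet q G) × ↥(ansSet q G) :=
    { toFun := fun π => (⟨restr1 q π.1, hmem1 π.1 π.2⟩, ⟨restr2 q ρ π.1, hmem2 π.1 π.2⟩)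
      invFun := fun p => ⟨combMap q ρ p.1.1 p.2.1, hmemc p.1.1 p.1.2 p.2.1 p.2.2⟩
      left_inv := fun π => Subtype.ext (hleft π.1 π.2)
      right_inv := fun p => by
        refine Prod.ext (Subtype.ext ?_) (Subtype.ext ?_)
        · exact hright1 p.1.1 p.1.2 p.2.1
        · exact hright2 p.1.1 p.2.1 p.2.2 }
  rw [Nat.card_congr e, Nat.card_prod]


lemma worlds_finite' {R : Type} [DecidableEq R] (S : Summary R) : (worlds S).Finite := by
  apply Set.Finite.subset (Finset.finite_toSet (S.dom ×ˢ S.dom ×ˢ S.dom).powerset)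
  rintro G ⟨hres, -, -⟩
  simp only [Finset.coe_powerset, Set.mem_preimage, Set.mem_powerset_iff, Finset.coe_subset]
  intro t ht
  have h1 : t.1 ∈ graphRes G := by
    simp only [graphRes, Finset.mem_union, Finset.mem_image]
    exact Or.inl (Or.inl ⟨t, ht, rfl⟩)
  have h2 : t.2.1 ∈ graphRes G := by
    simp only [graphRes, Finset.mem_union, Finset.mem_image]
    exact Or.inl (Or.inr ⟨t, ht, rfl⟩)
  have h3 : t.2.2 ∈ graphRes G := by
    simp only [graphRes, Finset.mem_union, Finset.mem_image]
    exact Or.inr ⟨t, ht, rfl⟩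
  simp only [Finset.mem_product]
  exact ⟨hres h1, hres h2, hres h3⟩

lemma variance_formula' {α : Type} (T : Finset α) (hT : T.Nonempty) (f : α → ℝ) :
    (∑ G ∈ T, (f G - (∑ G ∈ T, f G) / T.card) ^ 2) / T.card
      = (∑ G ∈ T, f G ^ 2) / T.card - ((∑ G ∈ T, f G) / T.card) ^ 2 := by
  have hn : (T.card : ℝ) ≠ 0 := Nat.cast_ne_zero.mpr hT.card_pos.ne'
  set n := (T.card : ℝ) with hnn
  set Sf := ∑ G ∈ T, f G with hSf
  have expand : ∀ G ∈ T, (f G - Sf / n) ^ 2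
      = f G ^ 2 - 2 * (Sf / n) * f G + (Sf / n) ^ 2 := fun G _ => by ring
  rw [Finset.sum_congr rfl expand, Finset.sum_add_distrib, Finset.sum_sub_distrib,
    ← Finset.mul_sum, Finset.sum_const, nsmul_eq_mul, ← hSf, ← hnn]
  field_simp
  ring

/-- `v_S[q] = E_S[q ∪ ρ(q)] − (E_S[q])²` for any renaming `ρ` of the
variables of `q` to fresh variables. -/
theorem variance_eq_expect_double {R V : Type} [DecidableEq R] [DecidableEq V] [Inhabited R]
    (S : Summary R) (hcons : consistent S) (q : CQ R V) (hq : resQ q ⊆ S.dom)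
    (ρ : V → V) (hinj : Set.InjOn ρ (varsQ q : Set V))
    (hfresh : ∀ x ∈ varsQ q, ρ x ∉ varsQ q) :
    varq S q = expect S (q ∪ renameQ ρ q) - (expect S q) ^ 2 := by
  classical
  have hWfin := worlds_finite' S
  have hTn : hWfin.toFinset.Nonempty := hWfin.toFinset_nonempty.mpr hcons
  have hE : expect S q
      = (∑ G ∈ hWfin.toFinset, ((ansSet q G).ncard : ℝ)) / hWfin.toFinset.card := by
    unfold expect
    rw [finsum_mem_eq_finite_toFinset_sum _ hWfin, Set.ncard_eq_toFinset_card _ hWfin]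
  have hV : varq S q
      = (∑ G ∈ hWfin.toFinset, (((ansSet q G).ncard : ℝ) - expect S q) ^ 2)
        / hWfin.toFinset.card := by
    unfold varq
    rw [finsum_mem_eq_finite_toFinset_sum _ hWfin, Set.ncard_eq_toFinset_card _ hWfin]
  have hE2 : expect S (q ∪ renameQ ρ q)
      = (∑ G ∈ hWfin.toFinset, ((ansSet q G).ncard : ℝ) ^ 2) / hWfin.toFinset.card := by
    unfold expect
    rw [finsum_mem_eq_finite_toFinset_sum _ hWfin, Set.ncard_eq_toFinset_card _ hWfin]
    congr 1
    refine Finset.sum_congr rfl (fun G _ => ?_)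
    rw [ncard_ansSet_union_rename q ρ hinj hfresh G]
    push_cast
    ring
  rw [hV, hE, hE2]
  exact variance_formula' hWfin.toFinset hTn _
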